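/- arXiv:2106.05530 — 2 statements merged into one kernel-verified Lean document; each statement's English description precedes it below -/
import Mathlib

section
/- Let D = { ρ : S×A → ℝ | ρ ≥ 0 and ∑_a ρ(s,a) = μ₀(s) + γ·∑_{s',a'} ρ(s',a')·P(s|s',a') for all s }. Then the map sending a stationary policy π to its discounted occupancy measure ρ_π is a bijection from the set of stationary policies (with π(a|s) well-defined whenever ∑_a ρ(s,a) > 0) onto D, with inverse given by π(a|s) = ρ(s,a) / ∑_{a'} ρ(s,a'). -/
/-!
Conditioning on the state writes every occupancy measure, and every solution of the flow
equations, as `ρ(s,a) = π(a|s) · d(s)` with state marginal `d`. Under this factorisation the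
flow equations become `d = μ₀ + γ dᵀ Q_π` for the state transition matrix `Q_π` of `π`. Since
`Q_π` is stochastic, `d ↦ μ₀ + γ dᵀ Q_π` is a `γ`-contraction in `ℓ¹`, so `d` is determined by
`π`; and `μ₀ > 0` forces `d > 0`, so `π` is determined by `ρ`.
-/

open Finset

noncomputable def stepDist {S A : Type*} [Fintype S] [Fintype A]
    (μ0 : S → ℝ) (P : S → A → S → ℝ) (π : S → A → ℝ) : ℕ → S × A → ℝ
  | 0 => fun sa => μ0 sa.1 * π sa.1 sa.2
  | (t + 1) => fun sa =>
      π sa.1 sa.2 * ∑ sa' : S × A, stepDist μ0 P π t sa' * P sa'.1 sa'.2 sa.1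

noncomputable def occMeasure {S A : Type*} [Fintype S] [Fintype A]
    (μ0 : S → ℝ) (P : S → A → S → ℝ) (π : S → A → ℝ) (γ : ℝ) (sa : S × A) : ℝ :=
  ∑' t : ℕ, γ ^ t * stepDist μ0 P π t sa

def IsStochastic {X Y : Type*} [Fintype Y] (k : X → Y → ℝ) : Prop :=
  (∀ x y, 0 ≤ k x y) ∧ ∀ x, ∑ y, k x y = 1

def policyKernel {S A : Type*} [Fintype A] (P : S → A → S → ℝ) (π : S → A → ℝ) (s' s : S) :
    ℝ :=
  ∑ a, π s' a * P s' a s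

def IsFlow {S A : Type*} [Fintype S] [Fintype A] (μ0 : S → ℝ) (P : S → A → S → ℝ) (γ : ℝ)
    (ρ : S × A → ℝ) : Prop :=
  ∀ s, ∑ a, ρ (s, a) = μ0 s + γ * ∑ sa' : S × A, ρ sa' * P sa'.1 sa'.2 s

noncomputable def condPolicy {S A : Type*} [Fintype A] (ρ : S × A → ℝ) (s : S) (a : A) : ℝ :=
  ρ (s, a) / ∑ a', ρ (s, a')

namespace IsStochastic

variable {X : Type*} [Fintype X] {q : X → X → ℝ} {γ : ℝ}

theorem sum_abs_sum_mul_le (hq : IsStochastic q) (f : X → ℝ) :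
    ∑ x, |∑ x', f x' * q x' x| ≤ ∑ x', |f x'| :=
  calc ∑ x, |∑ x', f x' * q x' x| ≤ ∑ x, ∑ x', |f x'| * q x' x :=
        sum_le_sum fun x _ => (abs_sum_le_sum_abs _ _).trans_eq
          (sum_congr rfl fun x' _ => by rw [abs_mul, abs_of_nonneg (hq.1 x' x)])
    _ = ∑ x', |f x'| := by
        rw [sum_comm]
        simp_rw [← mul_sum, hq.2, mul_one]

theorem eq_zero_of_eq_mul_sum (hq : IsStochastic q) (hγ : |γ| < 1) {f : X → ℝ}
    (hf : ∀ x, f x = γ * ∑ x', f x' * q x' x) : f = 0 := by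
  have hle : ∑ x, |f x| ≤ |γ| * ∑ x, |f x| :=
    calc ∑ x, |f x| = |γ| * ∑ x, |∑ x', f x' * q x' x| := by
          rw [mul_sum]
          exact sum_congr rfl fun x _ => by rw [hf x, abs_mul]
      _ ≤ |γ| * ∑ x, |f x| := mul_le_mul_of_nonneg_left (hq.sum_abs_sum_mul_le f) (abs_nonneg γ)
  have hzero : ∑ x, |f x| = 0 := by
    nlinarith [sum_nonneg fun x (_ : x ∈ univ) => abs_nonneg (f x)]
  funext x
  exact abs_eq_zero.mp ((sum_eq_zero_iff_of_nonneg fun x _ => abs_nonneg (f x)).mp hzero x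
    (mem_univ x))

theorem eq_of_flow (hq : IsStochastic q) (hγ : |γ| < 1) {μ d e : X → ℝ}
    (hd : ∀ x, d x = μ x + γ * ∑ x', d x' * q x' x)
    (he : ∀ x, e x = μ x + γ * ∑ x', e x' * q x' x) : d = e :=
  sub_eq_zero.mp <| hq.eq_zero_of_eq_mul_sum hγ fun x => by
    simp only [Pi.sub_apply, sub_mul, sum_sub_distrib]
    rw [hd x, he x]
    ring

end IsStochastic

theorem isStochastic_policyKernel {S A : Type*} [Fintype S] [Fintype A] {P : S → A → S → ℝ}
    {π : S → A → ℝ} (hP : ∀ s, IsStochastic (P s)) (hπ : IsStochastic π) :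
    IsStochastic (policyKernel P π) := by
  refine ⟨fun s' s => sum_nonneg fun a _ => mul_nonneg (hπ.1 s' a) ((hP s').1 a s), fun s' => ?_⟩
  rw [← hπ.2 s']
  simp only [policyKernel]
  rw [sum_comm]
  simp_rw [← mul_sum, (hP s').2, mul_one]

section stepDist

variable {S A : Type*} [Fintype S] [Fintype A] {μ0 : S → ℝ} {P : S → A → S → ℝ}
  {π : S → A → ℝ}

theorem stepDist_nonneg (hμ : ∀ s, 0 ≤ μ0 s) (hP : ∀ s a s', 0 ≤ P s a s')
    (hπ : ∀ s a, 0 ≤ π s a) (t : ℕ) (sa : S × A) : 0 ≤ stepDist μ0 P π t sa := by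
  induction t generalizing sa with
  | zero => exact mul_nonneg (hμ _) (hπ _ _)
  | succ t ih => exact mul_nonneg (hπ _ _) (sum_nonneg fun sa' _ => mul_nonneg (ih sa') (hP _ _ _))

theorem sum_stepDist_zero (hπ : ∀ s, ∑ a, π s a = 1) (s : S) :
    ∑ a, stepDist μ0 P π 0 (s, a) = μ0 s := by
  simp only [stepDist]
  rw [← mul_sum, hπ, mul_one]

theorem sum_stepDist_succ (hπ : ∀ s, ∑ a, π s a = 1) (t : ℕ) (s : S) :
    ∑ a, stepDist μ0 P π (t + 1) (s, a)
      = ∑ sa' : S × A, stepDist μ0 P π t sa' * P sa'.1 sa'.2 s := by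
  simp only [stepDist]
  rw [← sum_mul, hπ, one_mul]

theorem stepDist_eq_mul_sum (hπ : ∀ s, ∑ a, π s a = 1) (t : ℕ) (sa : S × A) :
    stepDist μ0 P π t sa = π sa.1 sa.2 * ∑ a, stepDist μ0 P π t (sa.1, a) := by
  cases t with
  | zero => rw [sum_stepDist_zero hπ, stepDist, mul_comm]
  | succ t => rw [sum_stepDist_succ hπ, stepDist]

theorem sum_stepDist (hP : ∀ s a, ∑ s', P s a s' = 1) (hπ : ∀ s, ∑ a, π s a = 1) (t : ℕ) :
    ∑ sa : S × A, stepDist μ0 P π t sa = ∑ s, μ0 s := by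
  induction t with
  | zero => simp only [Fintype.sum_prod_type, sum_stepDist_zero hπ]
  | succ t ih =>
    rw [Fintype.sum_prod_type]
    simp only [sum_stepDist_succ hπ]
    rw [sum_comm, ← ih]
    simp_rw [← mul_sum, hP, mul_one]

theorem stepDist_le_sum (hμ : ∀ s, 0 ≤ μ0 s) (hP : ∀ s, IsStochastic (P s))
    (hπ : IsStochastic π) (t : ℕ) (sa : S × A) : stepDist μ0 P π t sa ≤ ∑ s, μ0 s :=
  sum_stepDist (fun s => (hP s).2) hπ.2 t ▸
    single_le_sum (fun sa' _ => stepDist_nonneg hμ (fun s => (hP s).1) hπ.1 t sa') (mem_univ sa)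

end stepDist

section occMeasure

variable {S A : Type*} [Fintype S] [Fintype A] {μ0 : S → ℝ} {P : S → A → S → ℝ}
  {π : S → A → ℝ} {γ : ℝ}

theorem hasSum_occMeasure (hγ0 : 0 ≤ γ) (hγ1 : γ < 1) (hμ : ∀ s, 0 ≤ μ0 s)
    (hP : ∀ s, IsStochastic (P s)) (hπ : IsStochastic π) (sa : S × A) :
    HasSum (fun t => γ ^ t * stepDist μ0 P π t sa) (occMeasure μ0 P π γ sa) :=
  Summable.hasSum <| Summable.of_nonneg_of_le
    (fun t => mul_nonneg (pow_nonneg hγ0 t) (stepDist_nonneg hμ (fun s => (hP s).1) hπ.1 t sa))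
    (fun t => by
      rw [mul_comm]
      exact mul_le_mul_of_nonneg_right (stepDist_le_sum hμ hP hπ t sa) (pow_nonneg hγ0 t))
    ((summable_geometric_of_lt_one hγ0 hγ1).mul_left (∑ s, μ0 s))

theorem hasSum_sum_occMeasure (hγ0 : 0 ≤ γ) (hγ1 : γ < 1) (hμ : ∀ s, 0 ≤ μ0 s)
    (hP : ∀ s, IsStochastic (P s)) (hπ : IsStochastic π) (s : S) :
    HasSum (fun t => γ ^ t * ∑ a, stepDist μ0 P π t (s, a)) (∑ a, occMeasure μ0 P π γ (s, a)) := by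
  simpa only [mul_sum] using hasSum_sum fun a _ => hasSum_occMeasure hγ0 hγ1 hμ hP hπ (s, a)

theorem occMeasure_nonneg (hγ0 : 0 ≤ γ) (hμ : ∀ s, 0 ≤ μ0 s) (hP : ∀ s a s', 0 ≤ P s a s')
    (hπ : ∀ s a, 0 ≤ π s a) (sa : S × A) : 0 ≤ occMeasure μ0 P π γ sa :=
  tsum_nonneg fun t => mul_nonneg (pow_nonneg hγ0 t) (stepDist_nonneg hμ hP hπ t sa)

theorem occMeasure_eq_mul_sum (hγ0 : 0 ≤ γ) (hγ1 : γ < 1) (hμ : ∀ s, 0 ≤ μ0 s)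
    (hP : ∀ s, IsStochastic (P s)) (hπ : IsStochastic π) (sa : S × A) :
    occMeasure μ0 P π γ sa = π sa.1 sa.2 * ∑ a, occMeasure μ0 P π γ (sa.1, a) := by
  refine (hasSum_occMeasure hγ0 hγ1 hμ hP hπ sa).unique <|
    ((hasSum_sum_occMeasure hγ0 hγ1 hμ hP hπ sa.1).mul_left (π sa.1 sa.2)).congr_fun fun t => ?_
  rw [stepDist_eq_mul_sum hπ.2 t sa]
  ring

theorem isFlow_occMeasure (hγ0 : 0 ≤ γ) (hγ1 : γ < 1) (hμ : ∀ s, 0 ≤ μ0 s)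
    (hP : ∀ s, IsStochastic (P s)) (hπ : IsStochastic π) :
    IsFlow μ0 P γ (occMeasure μ0 P π γ) := by
  intro s
  have hshift : HasSum (fun t => γ ^ (t + 1) * ∑ a, stepDist μ0 P π (t + 1) (s, a))
      (γ * ∑ sa' : S × A, occMeasure μ0 P π γ sa' * P sa'.1 sa'.2 s) := by
    refine ((hasSum_sum fun sa' _ =>
      (hasSum_occMeasure hγ0 hγ1 hμ hP hπ sa').mul_right (P sa'.1 sa'.2 s)).mul_left γ).congr_fun
      fun t => ?_
    rw [sum_stepDist_succ hπ.2, pow_succ', mul_assoc, mul_sum]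
    simp_rw [mul_assoc]
  have h := (hasSum_nat_add_iff (f := fun t => γ ^ t * ∑ a, stepDist μ0 P π t (s, a)) 1).mp
    hshift
  rw [sum_range_one, pow_zero, one_mul, sum_stepDist_zero hπ.2] at h
  rw [(hasSum_sum_occMeasure hγ0 hγ1 hμ hP hπ s).unique h, add_comm]

end occMeasure

section condPolicy

variable {S A : Type*} [Fintype A] {ρ : S × A → ℝ}

theorem isStochastic_condPolicy (hρ0 : ∀ sa, 0 ≤ ρ sa) (hpos : ∀ s, 0 < ∑ a, ρ (s, a)) :
    IsStochastic (condPolicy ρ) :=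
  ⟨fun s a => div_nonneg (hρ0 _) (hpos s).le,
    fun s => by simp only [condPolicy]; rw [← sum_div, div_self (hpos s).ne']⟩

theorem condPolicy_mul_sum {sa : S × A} (h : ∑ a, ρ (sa.1, a) ≠ 0) :
    ρ sa = condPolicy ρ sa.1 sa.2 * ∑ a, ρ (sa.1, a) :=
  (div_mul_cancel₀ _ h).symm

end condPolicy

section flow

variable {S A : Type*} [Fintype S] [Fintype A] {μ0 : S → ℝ} {P : S → A → S → ℝ}
  {π : S → A → ℝ} {γ : ℝ} {ρ : S × A → ℝ}

theorem IsFlow.sum_pos (hρ : IsFlow μ0 P γ ρ) (hρ0 : ∀ sa, 0 ≤ ρ sa) (hγ0 : 0 ≤ γ)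
    (hP : ∀ s a s', 0 ≤ P s a s') {s : S} (hμ : 0 < μ0 s) : 0 < ∑ a, ρ (s, a) := by
  rw [hρ s]
  exact add_pos_of_pos_of_nonneg hμ
    (mul_nonneg hγ0 (sum_nonneg fun sa' _ => mul_nonneg (hρ0 sa') (hP _ _ _)))

theorem sum_mul_eq_sum_mul_policyKernel (hρπ : ∀ sa, ρ sa = π sa.1 sa.2 * ∑ a, ρ (sa.1, a))
    (s : S) :
    ∑ sa' : S × A, ρ sa' * P sa'.1 sa'.2 s = ∑ s', (∑ a, ρ (s', a)) * policyKernel P π s' s := by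
  rw [Fintype.sum_prod_type]
  refine sum_congr rfl fun s' _ => ?_
  rw [policyKernel, mul_sum]
  refine sum_congr rfl fun a _ => ?_
  rw [hρπ (s', a)]
  ring

theorem IsFlow.eq_of_eq_mul_sum (hγ : |γ| < 1) (hP : ∀ s, IsStochastic (P s))
    (hπ : IsStochastic π) {ρ' : S × A → ℝ} (hρ : IsFlow μ0 P γ ρ) (hρ' : IsFlow μ0 P γ ρ')
    (hρπ : ∀ sa, ρ sa = π sa.1 sa.2 * ∑ a, ρ (sa.1, a))
    (hρ'π : ∀ sa, ρ' sa = π sa.1 sa.2 * ∑ a, ρ' (sa.1, a)) : ρ = ρ' := by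
  have hmarginal : (fun s => ∑ a, ρ (s, a)) = fun s => ∑ a, ρ' (s, a) :=
    (isStochastic_policyKernel hP hπ).eq_of_flow hγ
      (fun s => by rw [hρ s, sum_mul_eq_sum_mul_policyKernel hρπ])
      (fun s => by rw [hρ' s, sum_mul_eq_sum_mul_policyKernel hρ'π])
  funext sa
  rw [hρπ sa, hρ'π sa, congrFun hmarginal sa.1]

end flow

section bijection

variable {S A : Type*} [Fintype S] [Fintype A] {μ0 : S → ℝ} {P : S → A → S → ℝ} {γ : ℝ}

theorem occMeasure_condPolicy (hγ0 : 0 ≤ γ) (hγ1 : γ < 1) (hμ : ∀ s, 0 < μ0 s)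
    (hP : ∀ s, IsStochastic (P s)) {ρ : S × A → ℝ} (hρ0 : ∀ sa, 0 ≤ ρ sa)
    (hρ : IsFlow μ0 P γ ρ) : occMeasure μ0 P (condPolicy ρ) γ = ρ := by
  have hpos s : 0 < ∑ a, ρ (s, a) := hρ.sum_pos hρ0 hγ0 (fun s => (hP s).1) (hμ s)
  have hπ := isStochastic_condPolicy hρ0 hpos
  exact (isFlow_occMeasure hγ0 hγ1 (fun s => (hμ s).le) hP hπ).eq_of_eq_mul_sum
    (abs_lt.2 ⟨by linarith, hγ1⟩) hP hπ hρ
    (occMeasure_eq_mul_sum hγ0 hγ1 (fun s => (hμ s).le) hP hπ)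
    (fun sa => condPolicy_mul_sum (hpos sa.1).ne')

theorem occMeasure_injOn (hγ0 : 0 ≤ γ) (hγ1 : γ < 1) (hμ : ∀ s, 0 < μ0 s)
    (hP : ∀ s, IsStochastic (P s)) :
    Set.InjOn (fun π => occMeasure μ0 P π γ) {π : S → A → ℝ | IsStochastic π} := by
  intro π hπ π' hπ' h
  replace h : occMeasure μ0 P π γ = occMeasure μ0 P π' γ := h
  have hμ' s : 0 ≤ μ0 s := (hμ s).le
  funext s a
  have hpos : 0 < ∑ a, occMeasure μ0 P π γ (s, a) :=
    (isFlow_occMeasure hγ0 hγ1 hμ' hP hπ).sum_pos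
      (occMeasure_nonneg hγ0 hμ' (fun s => (hP s).1) hπ.1) hγ0 (fun s => (hP s).1) (hμ s)
  refine mul_right_cancel₀ hpos.ne' ?_
  calc π s a * ∑ a, occMeasure μ0 P π γ (s, a)
      = occMeasure μ0 P π γ (s, a) := (occMeasure_eq_mul_sum hγ0 hγ1 hμ' hP hπ (s, a)).symm
    _ = π' s a * ∑ a, occMeasure μ0 P π' γ (s, a) := by
        rw [h, occMeasure_eq_mul_sum hγ0 hγ1 hμ' hP hπ' (s, a)]
    _ = π' s a * ∑ a, occMeasure μ0 P π γ (s, a) := by rw [h]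

end bijection

theorem occupancy_bijection_general
    {S A : Type*} [Fintype S] [Fintype A]
    (μ0 : S → ℝ) (P : S → A → S → ℝ) (γ : ℝ)
    (hγ0 : 0 ≤ γ) (hγ1 : γ < 1)
    (hμ0 : ∀ s, 0 < μ0 s)
    (hP0 : ∀ s a s', 0 ≤ P s a s') (hP1 : ∀ s a, ∑ s', P s a s' = 1) :
    Set.BijOn (fun π => occMeasure μ0 P π γ)
      {π : S → A → ℝ | (∀ s a, 0 ≤ π s a) ∧ ∀ s, ∑ a, π s a = 1}
      {ρ : S × A → ℝ | (∀ sa, 0 ≤ ρ sa) ∧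
        ∀ s, ∑ a, ρ (s, a) = μ0 s + γ * ∑ sa' : S × A, ρ sa' * P sa'.1 sa'.2 s} ∧
    ∀ ρ : S × A → ℝ,
      ((∀ sa, 0 ≤ ρ sa) ∧
        ∀ s, ∑ a, ρ (s, a) = μ0 s + γ * ∑ sa' : S × A, ρ sa' * P sa'.1 sa'.2 s) →
      occMeasure μ0 P (fun s a => ρ (s, a) / ∑ a', ρ (s, a')) γ = ρ := by
  have hP : ∀ s, IsStochastic (P s) := fun s => ⟨hP0 s, hP1 s⟩
  have hinv : ∀ ρ : S × A → ℝ, (∀ sa, 0 ≤ ρ sa) ∧ IsFlow μ0 P γ ρ →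
      occMeasure μ0 P (condPolicy ρ) γ = ρ :=
    fun ρ hρ => occMeasure_condPolicy hγ0 hγ1 hμ0 hP hρ.1 hρ.2
  refine ⟨⟨fun π hπ => ?_, occMeasure_injOn hγ0 hγ1 hμ0 hP, fun ρ hρ => ?_⟩, hinv⟩
  · exact ⟨occMeasure_nonneg hγ0 (fun s => (hμ0 s).le) hP0 hπ.1,
      isFlow_occMeasure hγ0 hγ1 (fun s => (hμ0 s).le) hP hπ⟩
  · exact ⟨condPolicy ρ,
      isStochastic_condPolicy hρ.1 fun s => IsFlow.sum_pos hρ.2 hρ.1 hγ0 hP0 (hμ0 s), hinv ρ hρ⟩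

/-- The map sending a stationary policy to its discounted occupancy measure is a
bijection from the set of stationary policies onto the Bellman flow polytope `D`,
with inverse given by conditioning: `π(a|s) = ρ(s,a) / ∑_{a'} ρ(s,a')`. -/
theorem occupancy_bijection
    {S A : Type*} [Fintype S] [Fintype A]
    (μ0 : S → ℝ) (P : S → A → S → ℝ) (γ : ℝ)
    (hγ0 : 0 ≤ γ) (hγ1 : γ < 1)
    (hμ0 : ∀ s, 0 < μ0 s) (hμ1 : ∑ s, μ0 s = 1)
    (hP0 : ∀ s a s', 0 ≤ P s a s') (hP1 : ∀ s a, ∑ s', P s a s' = 1) :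
    Set.BijOn (fun π => occMeasure μ0 P π γ)
      {π : S → A → ℝ | (∀ s a, 0 ≤ π s a) ∧ ∀ s, ∑ a, π s a = 1}
      {ρ : S × A → ℝ | (∀ sa, 0 ≤ ρ sa) ∧
        ∀ s, ∑ a, ρ (s, a) = μ0 s + γ * ∑ sa' : S × A, ρ sa' * P sa'.1 sa'.2 s} ∧
    ∀ ρ : S × A → ℝ,
      ((∀ sa, 0 ≤ ρ sa) ∧
        ∀ s, ∑ a, ρ (s, a) = μ0 s + γ * ∑ sa' : S × A, ρ sa' * P sa'.1 sa'.2 s) →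
      occMeasure μ0 P (fun s a => ρ (s, a) / ∑ a', ρ (s, a')) γ = ρ :=
  occupancy_bijection_general μ0 P γ hγ0 hγ1 hμ0 hP0 hP1
end

section
/- Let ρ ∈ D (the Bellman flow polytope) and define π(a|s) = ρ(s,a)/∑_{a'} ρ(s,a') whenever ∑_{a'} ρ(s,a') > 0. Then ρ is the occupancy measure of π: ρ = ρ_π. -/
/-!
With `m s = ∑ a, ρ (s, a)` and `Pπ` the state transition matrix of the conditioned policy `π`,
we have `m s * π s a = ρ (s, a)`, so the flow equation reads `m = μ₀ + m (γ Pπ)`. Unrolling it,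
`m = ∑_{t<k} μ₀ (γ Pπ)ᵗ + m (γ Pπ)ᵏ` with nonnegative terms, so the series `∑ μ₀ (γ Pπ)ᵗ`
converges. As `μ₀ > 0`, `m ≤ C μ₀` for some `C`, so the remainder is at most `C` times the
`k`-th term of that series and tends to `0`. Hence `m` is the discounted state occupancy of `π`,
and `ρ (s, a) = π s a * m s` is its state-action occupancy.
-/

open Finset

namespace Matrix

variable {n : Type*} [Fintype n] {M : Matrix n n ℝ}

theorem vecMul_nonneg_of_nonneg (hM : ∀ i j, 0 ≤ M i j) {v : n → ℝ} (hv : 0 ≤ v) :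
    0 ≤ v ᵥ* M :=
  fun j => sum_nonneg fun i _ => mul_nonneg (hv i) (hM i j)

variable [DecidableEq n]

theorem vecMul_pow_nonneg (hM : ∀ i j, 0 ≤ M i j) {v : n → ℝ} (hv : 0 ≤ v) (k : ℕ) :
    0 ≤ v ᵥ* M ^ k := by
  induction k with
  | zero => simpa using hv
  | succ k ih => simpa [pow_succ, vecMul_vecMul] using vecMul_nonneg_of_nonneg hM ih

theorem eq_sum_range_vecMul_pow_add {μ m : n → ℝ} (h : m = μ + m ᵥ* M) (k : ℕ) :
    m = ∑ t ∈ range k, μ ᵥ* M ^ t + m ᵥ* M ^ k := by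
  induction k with
  | zero => simp
  | succ k ih =>
    calc m = ∑ t ∈ range k, μ ᵥ* M ^ t + m ᵥ* M ^ k := ih
      _ = ∑ t ∈ range k, μ ᵥ* M ^ t + (μ + m ᵥ* M) ᵥ* M ^ k := by rw [← h]
      _ = ∑ t ∈ range (k + 1), μ ᵥ* M ^ t + m ᵥ* M ^ (k + 1) := by
        rw [add_vecMul, vecMul_vecMul, ← pow_succ', sum_range_succ, add_assoc]

theorem hasSum_vecMul_pow_of_eq_add_vecMul (hM : ∀ i j, 0 ≤ M i j) {μ m : n → ℝ}
    (hμ : ∀ i, 0 < μ i) (hm : 0 ≤ m) (h : m = μ + m ᵥ* M) :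
    HasSum (fun t => μ ᵥ* M ^ t) m := by
  have hpartial := eq_sum_range_vecMul_pow_add h
  have hterm := vecMul_pow_nonneg hM fun i => (hμ i).le
  have htail := vecMul_pow_nonneg hM hm
  have hsummable : Summable fun t => μ ᵥ* M ^ t := by
    refine Pi.summable.2 fun i =>
      summable_of_sum_range_le (c := m i) (fun t => hterm t i) fun k => ?_
    have := congr_fun (hpartial k) i
    simp only [Pi.add_apply, Finset.sum_apply] at this
    linarith [show (0 : ℝ) ≤ _ from htail k i]
  obtain ⟨C, hC⟩ : ∃ C : ℝ, m ≤ C • μ := by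
    refine ⟨∑ i, m i / μ i, fun i => ?_⟩
    calc m i = m i / μ i * μ i := (div_mul_cancel₀ _ (hμ i).ne').symm
      _ ≤ (∑ j, m j / μ j) * μ i := by
        gcongr
        · exact (hμ i).le
        · exact single_le_sum (fun j _ => div_nonneg (hm j) (hμ j).le) (mem_univ i)
  have htail_zero : Filter.Tendsto (fun k => m ᵥ* M ^ k) Filter.atTop (nhds 0) := by
    have hdom : ∀ k, m ᵥ* M ^ k ≤ C • (μ ᵥ* M ^ k) := fun k => by
      simpa [sub_vecMul, smul_vecMul] using vecMul_pow_nonneg hM (sub_nonneg.2 hC) k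
    have hlim := hsummable.tendsto_atTop_zero.const_smul C
    rw [smul_zero] at hlim
    rw [tendsto_pi_nhds] at hlim ⊢
    exact fun i => squeeze_zero (fun k => htail k i) (fun k => hdom k i) (hlim i)
  rw [hsummable.hasSum_iff_tendsto_nat]
  have : Filter.Tendsto (fun k => m - m ᵥ* M ^ k) Filter.atTop (nhds (m - 0)) :=
    tendsto_const_nhds.sub htail_zero
  rw [sub_zero] at this
  refine this.congr fun k => ?_
  rw [sub_eq_iff_eq_add, ← hpartial]

end Matrix

open Matrix

/-- Where the sum vanishes, nonnegativity forces `f i = 0`, so the junk value `f i / 0 = 0` is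
harmless. -/
theorem sum_mul_div_sum_of_nonneg {ι : Type*} [Fintype ι] {f : ι → ℝ} (hf : ∀ i, 0 ≤ f i)
    (i : ι) : (∑ j, f j) * (f i / ∑ j, f j) = f i := by
  rcases (sum_nonneg fun j _ => hf j).eq_or_lt with h | h
  · rw [← h, zero_mul, eq_comm]
    exact (sum_eq_zero_iff_of_nonneg fun j _ => hf j).1 h.symm i (mem_univ i)
  · exact mul_div_cancel₀ _ h.ne'

section MDP

variable {S A : Type*} [Fintype A]

def policyTransition (P : S → A → S → ℝ) (π : S → A → ℝ) : Matrix S S ℝ :=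
  of fun s s' => ∑ a, π s a * P s a s'

variable {P : S → A → S → ℝ} {π : S → A → ℝ}

theorem policyTransition_nonneg (hP : ∀ s a s', 0 ≤ P s a s') (hπ : ∀ s a, 0 ≤ π s a)
    (s s' : S) : 0 ≤ policyTransition P π s s' :=
  sum_nonneg fun a _ => mul_nonneg (hπ s a) (hP s a s')

variable [Fintype S]

theorem vecMul_policyTransition_apply (v : S → ℝ) (s : S) :
    (v ᵥ* policyTransition P π) s = ∑ sa : S × A, v sa.1 * π sa.1 sa.2 * P sa.1 sa.2 s := by
  simp only [Matrix.vecMul, dotProduct, policyTransition, of_apply, mul_sum,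
    Fintype.sum_prod_type, mul_assoc]

variable [DecidableEq S]

theorem stepDist_eq_mul_vecMul_pow (μ0 : S → ℝ) (t : ℕ) (sa : S × A) :
    stepDist μ0 P π t sa = π sa.1 sa.2 * (μ0 ᵥ* policyTransition P π ^ t) sa.1 := by
  induction t generalizing sa with
  | zero => simp [stepDist, mul_comm]
  | succ t ih =>
    rw [stepDist, pow_succ, ← vecMul_vecMul, vecMul_policyTransition_apply]
    simp only [ih, mul_comm (π _ _)]

theorem occMeasure_eq_mul_tsum (μ0 : S → ℝ) (γ : ℝ) (sa : S × A) :
    occMeasure μ0 P π γ sa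
      = π sa.1 sa.2 * ∑' t, (μ0 ᵥ* (γ • policyTransition P π) ^ t) sa.1 := by
  simp only [occMeasure, stepDist_eq_mul_vecMul_pow, smul_pow, vecMul_smul,
    Pi.smul_apply, smul_eq_mul, ← tsum_mul_left, mul_left_comm]

end MDP

theorem flow_polytope_is_occupancy_general
    {S A : Type*} [Fintype S] [Fintype A]
    (μ0 : S → ℝ) (P : S → A → S → ℝ) (γ : ℝ)
    (hγ0 : 0 ≤ γ)
    (hμ0 : ∀ s, 0 < μ0 s)
    (hP0 : ∀ s a s', 0 ≤ P s a s')
    (ρ : S × A → ℝ) (hρ0 : ∀ sa, 0 ≤ ρ sa)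
    (hflow : ∀ s, ∑ a, ρ (s, a)
        = μ0 s + γ * ∑ sa' : S × A, ρ sa' * P sa'.1 sa'.2 s) :
    occMeasure μ0 P (fun s a => ρ (s, a) / ∑ a', ρ (s, a')) γ = ρ := by
  classical
  set π : S → A → ℝ := fun s a => ρ (s, a) / ∑ a', ρ (s, a')
  set m : S → ℝ := fun s => ∑ a, ρ (s, a)
  have hmπ : ∀ s a, m s * π s a = ρ (s, a) := fun s =>
    sum_mul_div_sum_of_nonneg fun a => hρ0 (s, a)
  have hfix : m = μ0 + m ᵥ* (γ • policyTransition P π) := by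
    ext s
    rw [vecMul_smul, Pi.add_apply, Pi.smul_apply, vecMul_policyTransition_apply]
    simp only [hmπ, smul_eq_mul]
    exact hflow s
  have hM : ∀ s s', 0 ≤ (γ • policyTransition P π) s s' := fun s s' =>
    mul_nonneg hγ0 <| policyTransition_nonneg hP0
      (fun s a => div_nonneg (hρ0 _) (sum_nonneg fun a _ => hρ0 _)) s s'
  have hsum := hasSum_vecMul_pow_of_eq_add_vecMul hM hμ0
    (fun s => sum_nonneg fun a _ => hρ0 (s, a)) hfix
  ext ⟨s, a⟩
  rw [occMeasure_eq_mul_tsum, (Pi.hasSum.1 hsum s).tsum_eq, mul_comm]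
  exact hmπ s a

/-- If `ρ` lies in the Bellman flow polytope `D` and `π` is the policy obtained by
conditioning, `π(a|s) = ρ(s,a)/∑_{a'} ρ(s,a')`, then `ρ` is the occupancy measure
of `π`. -/
theorem flow_polytope_is_occupancy
    {S A : Type*} [Fintype S] [Fintype A]
    (μ0 : S → ℝ) (P : S → A → S → ℝ) (γ : ℝ)
    (hγ0 : 0 ≤ γ) (hγ1 : γ < 1)
    (hμ0 : ∀ s, 0 < μ0 s) (hμ1 : ∑ s, μ0 s = 1)
    (hP0 : ∀ s a s', 0 ≤ P s a s') (hP1 : ∀ s a, ∑ s', P s a s' = 1)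
    (ρ : S × A → ℝ) (hρ0 : ∀ sa, 0 ≤ ρ sa)
    (hflow : ∀ s, ∑ a, ρ (s, a)
        = μ0 s + γ * ∑ sa' : S × A, ρ sa' * P sa'.1 sa'.2 s) :
    occMeasure μ0 P (fun s a => ρ (s, a) / ∑ a', ρ (s, a')) γ = ρ :=
  flow_polytope_is_occupancy_general μ0 P γ hγ0 hμ0 hP0 ρ hρ0 hflow
end
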